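/- If a group G acts on a tree T, x ∈ G is elliptic fixing a vertex v, y ∈ G is any element with y·v ≠ v, e₊ is the initial edge of the geodesic [v, y·v], e₋ is the initial edge of [v, y⁻¹·v], and x·e₊ ∉ {e₊, e₋}, then the concatenation [y⁻¹·v, v]·[v, x·y·v] is a geodesic in T. -/

import Mathlib

/-!
Since `x` fixes `v`, it maps the edge `(v, wp)` starting the geodesic `[v, y • v]` to the edge
`(v, x • wp)` starting the geodesic `[v, (x * y) • v]`. By hypothesis this edge differs from the
edge `(v, wm)` starting `[v, y⁻¹ • v]`, and in a tree two geodesics leaving `v` along different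
edges concatenate to a geodesic: a shortest walk from `y⁻¹ • v` to `(x * y) • v` avoiding `v`
would give a second path from `v` to `(x * y) • v`, through `wm`.
-/

namespace SimpleGraph

variable {V W : Type*} {G : SimpleGraph V} {G' : SimpleGraph W} {a c r u v w : V}

theorem Hom.edist_map_le (f : G →g G') (u v : V) : G'.edist (f u) (f v) ≤ G.edist u v := by
  by_cases hr : G.Reachable u v
  · obtain ⟨p, hp⟩ := hr.exists_walk_length_eq_edist
    rw [← hp, ← p.length_map f]
    exact edist_le _
  · rw [edist_eq_top_of_not_reachable hr]
    exact le_top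

theorem Iso.edist_map (f : G ≃g G') (u v : V) : G'.edist (f u) (f v) = G.edist u v :=
  le_antisymm (f.toHom.edist_map_le u v) <| by
    simpa using f.symm.toHom.edist_map_le (f u) (f v)

theorem Iso.dist_map (f : G ≃g G') (u v : V) : G'.dist (f u) (f v) = G.dist u v :=
  congrArg ENat.toNat (f.edist_map u v)

theorem Walk.notMem_support_of_length_lt_dist (p : G.Walk u w) (hp : p.length < G.dist v w) :
    v ∉ p.support := by
  classical
  exact fun hv => (dist_le (p.dropUntil v hv)).not_gt <|
    (p.length_dropUntil_le_length hv).trans_lt hp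

theorem dist_eq_dist_add_dist_of_mem_support {p : G.Walk u w} (hp : p.length = G.dist u w)
    (hv : v ∈ p.support) : G.dist u w = G.dist u v + G.dist v w := by
  classical
  calc G.dist u w = p.length := hp.symm
    _ = (p.takeUntil v hv).length + (p.dropUntil v hv).length := by
      rw [← Walk.length_append, p.take_spec hv]
    _ = G.dist u v + G.dist v w := by
      rw [length_eq_dist_of_subwalk hp (p.isSubwalk_takeUntil hv),
        length_eq_dist_of_subwalk hp (p.isSubwalk_dropUntil hv)]

theorem IsTree.mem_support_of_adj_of_dist_add_one (hG : G.IsTree) (hw : G.Adj v w)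
    (hr : G.Adj v r) (hne : w ≠ r) (hrc : G.dist r c + 1 = G.dist v c) (p : G.Walk w c) :
    v ∈ p.support := by
  classical
  by_contra hv
  obtain ⟨q, hq, hql⟩ := hG.connected.exists_path_of_dist r c
  have hvq : v ∉ q.support := q.notMem_support_of_length_lt_dist (by omega)
  have hpath : (p.bypass.cons hw).IsPath :=
    p.bypass_isPath.cons fun h => hv (p.support_bypass_subset_support h)
  have hpq := (hG.existsUnique_path v c).unique hpath (hq.cons hvq : (q.cons hr).IsPath)
  exact hne (by simpa using congrArg Walk.snd hpq)

theorem IsTree.dist_eq_dist_add_dist_of_adj_of_ne (hG : G.IsTree) (hw : G.Adj v w)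
    (hr : G.Adj v r) (hne : w ≠ r) (hwa : G.dist w a + 1 = G.dist v a)
    (hrc : G.dist r c + 1 = G.dist v c) : G.dist a c = G.dist a v + G.dist v c := by
  obtain ⟨p, hp⟩ := hG.connected.exists_walk_length_eq_dist w a
  obtain ⟨q, hq⟩ := hG.connected.exists_walk_length_eq_dist a c
  have hvp : v ∉ p.support := p.notMem_support_of_length_lt_dist (by omega)
  have hvq : v ∈ q.support := by
    simpa [Walk.mem_support_append_iff, hvp] using
      hG.mem_support_of_adj_of_dist_add_one hw hr hne hrc (p.append q)
  exact dist_eq_dist_add_dist_of_mem_support hq hvq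

end SimpleGraph

section GraphAction

variable {G V : Type*} [Group G] [MulAction G V] {T : SimpleGraph V}

def SimpleGraph.smulIso (hadj : ∀ (g : G) (a b : V), T.Adj a b → T.Adj (g • a) (g • b))
    (g : G) : T ≃g T where
  toEquiv := MulAction.toPerm g
  map_rel_iff' := ⟨fun h => by simpa using hadj g⁻¹ _ _ h, hadj g _ _⟩

theorem SimpleGraph.dist_smul_smul
    (hadj : ∀ (g : G) (a b : V), T.Adj a b → T.Adj (g • a) (g • b)) (g : G) (a b : V) :
    T.dist (g • a) (g • b) = T.dist a b :=
  (smulIso hadj g).dist_map a b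

end GraphAction

theorem concat_geodesic_of_elliptic_general {G V : Type*} [Group G] (T : SimpleGraph V)
    (hT : T.IsTree) [MulAction G V]
    (hadj : ∀ (g : G) (a b : V), T.Adj a b → T.Adj (g • a) (g • b))
    (x y : G) (v wp wm : V)
    (hx : x • v = v)
    (hwp : T.Adj v wp) (hwpgeo : T.dist wp (y • v) + 1 = T.dist v (y • v))
    (hwm : T.Adj v wm) (hwmgeo : T.dist wm (y⁻¹ • v) + 1 = T.dist v (y⁻¹ • v))
    (hxe : x • wp ≠ wp ∧ x • wp ≠ wm) :
    T.dist (y⁻¹ • v) ((x * y) • v) =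
      T.dist (y⁻¹ • v) v + T.dist v ((x * y) • v) := by
  have hdist := SimpleGraph.dist_smul_smul hadj x
  have hxwp : T.Adj v (x • wp) := hx ▸ hadj x v wp hwp
  have hxgeo : T.dist (x • wp) ((x * y) • v) + 1 = T.dist v ((x * y) • v) := by
    rw [mul_smul, hdist, hwpgeo, ← hdist v (y • v), hx]
  exact hT.dist_eq_dist_add_dist_of_adj_of_ne hwm hxwp (Ne.symm hxe.2) hwmgeo hxgeo

/-- Let a group `G` act on a simplicial tree `T` by graph automorphisms. Suppose
`x ∈ G` is elliptic, fixing a vertex `v`, and `y ∈ G` satisfies `y • v ≠ v`. Let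
`e₊ = (v, wp)` be the initial edge of the geodesic `[v, y • v]` (so `wp` is adjacent
to `v` and lies on that geodesic) and `e₋ = (v, wm)` the initial edge of
`[v, y⁻¹ • v]`. If `x • e₊ ∉ {e₊, e₋}` (i.e. `x • wp ∉ {wp, wm}`, note `x` fixes `v`),
then the concatenation `[y⁻¹ • v, v] · [v, (x*y) • v]` is a geodesic, i.e. the
distances add. -/
theorem concat_geodesic_of_elliptic {G V : Type*} [Group G] (T : SimpleGraph V)
    (hT : T.IsTree) [MulAction G V]
    (hadj : ∀ (g : G) (a b : V), T.Adj a b → T.Adj (g • a) (g • b))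
    (x y : G) (v wp wm : V)
    (hx : x • v = v) (hy : y • v ≠ v)
    (hwp : T.Adj v wp) (hwpgeo : T.dist wp (y • v) + 1 = T.dist v (y • v))
    (hwm : T.Adj v wm) (hwmgeo : T.dist wm (y⁻¹ • v) + 1 = T.dist v (y⁻¹ • v))
    (hxe : x • wp ≠ wp ∧ x • wp ≠ wm) :
    T.dist (y⁻¹ • v) ((x * y) • v) =
      T.dist (y⁻¹ • v) v + T.dist v ((x * y) • v) :=
  concat_geodesic_of_elliptic_general T hT hadj x y v wp wm hx hwp hwpgeo hwm hwmgeo hxe
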